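/- arXiv:1809.07402 — 2 statements merged into one kernel-verified Lean document; each statement's English description precedes it below -/
import Mathlib

section
/- (Lemma 4). Fix a prior probability measure π on ℝ^m, δ > 0 and η > 0. With probability at least 1 − δ over the draw of n i.i.d. samples, the following holds simultaneously for every local optimum w* with ∇L̂(w*) = 0 such that L̂ is ρ-Hessian Lipschitz on Neigh_{γ,ε}(w*), and every random perturbation u with |u_i| ≤ κ_{γ,ε}(w*_i) almost surely for all i (no independence or zero-mean assumption): E_u[L(w*+u)] ≤ L̂(w*) + (1/2)·λ_max(∇²L̂(w*))·∑_{i=1}^m E[u_i²] + (ρ/6)·E[‖u‖³] + (KL(law(w*+u)‖π) + log(1/δ))/η + η/(2n), where λ_max denotes the largest eigenvalue. -/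
/-!
Since `∇L̂(w*) = 0`, Taylor's theorem with the Hessian-Lipschitz remainder gives
`L̂(w*+u) ≤ L̂(w*) + ½ uᵀ∇²L̂(w*)u + (ρ/6)‖u‖³` on the box `Neigh_{γ,ε}(w*)`, and
`uᵀ∇²L̂(w*)u ≤ λ_max ‖u‖²`; integrating against the law of `u` bounds `E L̂(w*+u)`.

For the generalization gap, Hoeffding's lemma on each sample and Fubini give
`E_s ∫ exp(η(L − L̂_s)) dπ ≤ exp(η²/(8n))`, so by Markov's inequality this integral is at most
`exp(η²/(8n))/δ` with probability `≥ 1 − δ`. On that event the Donsker–Varadhan change of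
measure `η E_ν[L − L̂] ≤ KL(ν‖π) + log ∫ exp(η(L − L̂)) dπ` holds for every posterior `ν`
at once, in particular for `ν = law(w* + u)`.
-/

open MeasureTheory ProbabilityTheory

noncomputable section

open scoped Classical

/-- Kullback–Leibler divergence (in nats) between measures, valued in `EReal`
(`⊤` when `ρ` is not absolutely continuous w.r.t. `π` or the log-likelihood ratio
is not `ρ`-integrable). -/
def klDiv {α : Type*} [MeasurableSpace α] (ρ π : Measure α) : EReal :=
  if ρ ≪ π ∧ Integrable (llr ρ π) ρ then ((∫ x, llr ρ π x ∂ρ : ℝ) : EReal) else ⊤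

/-- Euclidean norm on `Fin m → ℝ`. -/
def euclNorm {m : ℕ} (u : Fin m → ℝ) : ℝ := Real.sqrt (∑ i, (u i) ^ 2)

/-- `κ_{γ,ε}(t) = γ|t| + ε`. -/
def kappa (γ ε t : ℝ) : ℝ := γ * |t| + ε

/-- `Neigh_{γ,ε}(w) = {v : |vᵢ − wᵢ| ≤ κ_{γ,ε}(wᵢ) ∀ i}`. -/
def Neigh {m : ℕ} (γ ε : ℝ) (w : Fin m → ℝ) : Set (Fin m → ℝ) :=
  {v | ∀ i, |v i - w i| ≤ kappa γ ε (w i)}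

/-- `i`-th diagonal entry of the Hessian of `f` at `w`. -/
def hessDiag {m : ℕ} (f : (Fin m → ℝ) → ℝ) (w : Fin m → ℝ) (i : Fin m) : ℝ :=
  iteratedFDeriv ℝ 2 f w ![Pi.single i 1, Pi.single i 1]

/-- `f` is twice differentiable and `ρ`-Hessian Lipschitz on `N`, i.e.
`‖∇²f(w₁) − ∇²f(w₂)‖ ≤ ρ‖w₁ − w₂‖` where `‖·‖` is the operator norm w.r.t. the
Euclidean norm (expressed by testing the bilinear form against all `u, v`). -/
def IsHessianLipschitzOn {m : ℕ} (f : (Fin m → ℝ) → ℝ) (ρ : ℝ) (N : Set (Fin m → ℝ)) : Prop :=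
  ContDiffOn ℝ 2 f N ∧
    ∀ w₁ ∈ N, ∀ w₂ ∈ N, ∀ u v : Fin m → ℝ,
      |iteratedFDeriv ℝ 2 f w₁ ![u, v] - iteratedFDeriv ℝ 2 f w₂ ![u, v]|
        ≤ ρ * euclNorm (w₁ - w₂) * euclNorm u * euclNorm v

/-- Expected loss `L(w) = E_{x ∼ 𝒟}[ℓ(w, x)]`. -/
def expLoss {S : Type*} [MeasurableSpace S] {m : ℕ} (ℓ : (Fin m → ℝ) → S → ℝ)
    (𝒟 : Measure S) (w : Fin m → ℝ) : ℝ := ∫ x, ℓ w x ∂𝒟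

/-- Empirical loss `L̂(w) = (1/n) ∑ᵢ ℓ(w, sᵢ)`. -/
def empLoss {S : Type*} {m n : ℕ} (ℓ : (Fin m → ℝ) → S → ℝ) (s : Fin n → S)
    (w : Fin m → ℝ) : ℝ := (n : ℝ)⁻¹ * ∑ i, ℓ w (s i)

/-- `λ_max(∇²f(w))`: the largest eigenvalue of the (symmetric, for `C²` functions)
Hessian of `f` at `w`, expressed as the extremum of the Rayleigh quotient, i.e. the
supremum of `uᵀ∇²f(w)u` over Euclidean-unit vectors `u`. -/
def hessLambdaMax {m : ℕ} (f : (Fin m → ℝ) → ℝ) (w : Fin m → ℝ) : ℝ :=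
  ⨆ v : {v : Fin m → ℝ // euclNorm v = 1}, iteratedFDeriv ℝ 2 f w ![v.1, v.1]

open Set

section EuclNorm

variable {m : ℕ}

lemma euclNorm_eq_norm_toLp (u : Fin m → ℝ) :
    euclNorm u = ‖(WithLp.toLp 2 u : EuclideanSpace ℝ (Fin m))‖ := by
  simp [euclNorm, EuclideanSpace.norm_eq]

lemma euclNorm_nonneg (u : Fin m → ℝ) : 0 ≤ euclNorm u := Real.sqrt_nonneg _

lemma euclNorm_sq (u : Fin m → ℝ) : euclNorm u ^ 2 = ∑ i, u i ^ 2 :=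
  Real.sq_sqrt (by positivity)

lemma euclNorm_smul (t : ℝ) (u : Fin m → ℝ) : euclNorm (t • u) = |t| * euclNorm u := by
  simp [euclNorm_eq_norm_toLp, norm_smul]

lemma euclNorm_eq_zero {u : Fin m → ℝ} : euclNorm u = 0 ↔ u = 0 := by
  simp [euclNorm_eq_norm_toLp]

lemma norm_le_euclNorm (u : Fin m → ℝ) : ‖u‖ ≤ euclNorm u := by
  refine pi_norm_le_iff_of_nonneg (euclNorm_nonneg u) |>.2 fun i => ?_
  rw [euclNorm_eq_norm_toLp]
  exact PiLp.norm_apply_le (WithLp.toLp 2 u : EuclideanSpace ℝ (Fin m)) i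

lemma euclNorm_le_of_abs_le {u v : Fin m → ℝ} (h : ∀ i, |u i| ≤ v i) :
    euclNorm u ≤ euclNorm v :=
  Real.sqrt_le_sqrt <| Finset.sum_le_sum fun i _ => by
    simpa only [sq_abs] using pow_le_pow_left₀ (abs_nonneg (u i)) (h i) 2

lemma continuous_euclNorm : Continuous (euclNorm (m := m)) := by
  simp_rw [funext euclNorm_eq_norm_toLp]
  fun_prop

end EuclNorm

lemma ContinuousMultilinearMap.apply_smul_two {E : Type*} [NormedAddCommGroup E]
    [NormedSpace ℝ E] (B : ContinuousMultilinearMap ℝ (fun _ : Fin 2 => E) ℝ) (c : ℝ) (v : E) :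
    B ![c • v, c • v] = c ^ 2 * B ![v, v] := by
  have h := B.map_smul_univ (fun _ => c) ![v, v]
  have hv : (fun i => (fun _ : Fin 2 => c) i • (![v, v] : Fin 2 → E) i) = ![c • v, c • v] := by
    ext i; fin_cases i <;> rfl
  rw [hv] at h
  simp [h, sq]

lemma iteratedFDeriv_two_apply_self_le_hessLambdaMax {m : ℕ} (f : (Fin m → ℝ) → ℝ)
    (w u : Fin m → ℝ) :
    iteratedFDeriv ℝ 2 f w ![u, u] ≤ hessLambdaMax f w * euclNorm u ^ 2 := by
  set B := iteratedFDeriv ℝ 2 f w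
  have hbdd : BddAbove (range fun v : {v : Fin m → ℝ // euclNorm v = 1} => B ![v.1, v.1]) := by
    refine ⟨‖B‖, ?_⟩
    rintro _ ⟨⟨v, hv⟩, rfl⟩
    have hv1 : ‖v‖ ≤ 1 := hv ▸ norm_le_euclNorm v
    calc B ![v, v] ≤ ‖B‖ * ∏ i, ‖(![v, v] : Fin 2 → Fin m → ℝ) i‖ :=
          (le_abs_self _).trans (B.le_opNorm _)
      _ ≤ ‖B‖ * 1 := by
          gcongr
          simpa [Fin.prod_univ_two] using mul_le_one₀ hv1 (norm_nonneg v) hv1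
      _ = ‖B‖ := mul_one _
  rcases eq_or_ne u 0 with rfl | hu
  · simpa [show euclNorm (0 : Fin m → ℝ) = 0 from euclNorm_eq_zero.2 rfl] using
      (B.apply_smul_two 0 0).le
  have hpos : 0 < euclNorm u :=
    (euclNorm_nonneg u).lt_of_ne (Ne.symm (mt euclNorm_eq_zero.1 hu))
  set v := (euclNorm u)⁻¹ • u
  have hv : euclNorm v = 1 := by
    rw [euclNorm_smul, abs_inv, abs_of_pos hpos, inv_mul_cancel₀ hpos.ne']
  have huv : u = euclNorm u • v := by rw [smul_inv_smul₀ hpos.ne']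
  rw [huv, B.apply_smul_two, ← huv, mul_comm]
  exact mul_le_mul_of_nonneg_right (le_ciSup hbdd ⟨v, hv⟩) (sq_nonneg _)

lemma le_taylor_two_of_hasDerivAt {g g₁ g₂ : ℝ → ℝ} {Q K : ℝ} (hg : ContinuousOn g (Icc 0 1))
    (hg' : ∀ t ∈ Ico (0 : ℝ) 1, HasDerivAt g (g₁ t) t)
    (hg₁' : ∀ t ∈ Ico (0 : ℝ) 1, HasDerivAt g₁ (g₂ t) t)
    (hg₂ : ∀ t ∈ Ico (0 : ℝ) 1, g₂ t ≤ Q + K * t) :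
    g 1 ≤ g 0 + g₁ 0 + Q / 2 + K / 6 := by
  have hIoo : interior (Icc (0 : ℝ) 1) ⊆ Ico 0 1 :=
    interior_Icc.subset.trans Ioo_subset_Ico_self
  -- With `P` the cubic Taylor polynomial, first `g₁ - P'` and then `g - P` are antitone.
  have hP' (t : ℝ) : HasDerivAt (fun t => Q * t + K * t ^ 2 / 2) (Q + K * t) t :=
    (((hasDerivAt_id t).const_mul Q).add
      (((hasDerivAt_pow 2 t).const_mul K).div_const 2)).congr_deriv (by norm_num; ring)
  have hP (t : ℝ) : HasDerivAt (fun t => g₁ 0 * t + Q * t ^ 2 / 2 + K * t ^ 3 / 6)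
      (g₁ 0 + (Q * t + K * t ^ 2 / 2)) t :=
    ((((hasDerivAt_id t).const_mul (g₁ 0)).add
      (((hasDerivAt_pow 2 t).const_mul Q).div_const 2)).add
      (((hasDerivAt_pow 3 t).const_mul K).div_const 6)).congr_deriv (by norm_num; ring)
  have hφ₁ : AntitoneOn (fun t => g₁ t - (Q * t + K * t ^ 2 / 2)) (Ico 0 1) :=
    antitoneOn_of_hasDerivWithinAt_nonpos (convex_Ico 0 1)
      (fun t ht => ((hg₁' t ht).sub (hP' t)).continuousAt.continuousWithinAt)
      (fun t ht => ((hg₁' t (interior_subset ht)).sub (hP' t)).hasDerivWithinAt)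
      (fun t ht => sub_nonpos.2 (hg₂ t (interior_subset ht)))
  have hφ : AntitoneOn (fun t => g t - (g₁ 0 * t + Q * t ^ 2 / 2 + K * t ^ 3 / 6))
      (Icc 0 1) := by
    refine antitoneOn_of_hasDerivWithinAt_nonpos (convex_Icc 0 1)
      (hg.sub (fun t _ => (hP t).continuousAt.continuousWithinAt))
      (fun t ht => ((hg' t (hIoo ht)).sub (hP t)).hasDerivWithinAt) (fun t ht => ?_)
    have := hφ₁ (left_mem_Ico.2 one_pos) (hIoo ht) (hIoo ht).1
    simp only at this
    linarith
  have := hφ (left_mem_Icc.2 zero_le_one) (right_mem_Icc.2 zero_le_one) zero_le_one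
  simp only at this
  linarith

lemma le_taylor_two_of_isHessianLipschitzOn {m : ℕ} {f : (Fin m → ℝ) → ℝ} {ρ : ℝ}
    {N : Set (Fin m → ℝ)} {w u : Fin m → ℝ} (hf : IsHessianLipschitzOn f ρ N)
    (hseg : ∀ t ∈ Ico (0 : ℝ) 1, w + t • u ∈ interior N) (hu : w + u ∈ N) :
    f (w + u) ≤ f w + fderiv ℝ f w u + (1 / 2) * iteratedFDeriv ℝ 2 f w ![u, u]
      + (ρ / 6) * euclNorm u ^ 3 := by
  set c : ℝ → Fin m → ℝ := fun t => w + t • u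
  have hc (t : ℝ) : HasDerivAt c u t := by
    simpa only [id, one_smul] using ((hasDerivAt_id t).smul_const u).const_add w
  have hf₂ : ∀ t ∈ Ico (0 : ℝ) 1, ContDiffAt ℝ 2 f (c t) := fun t ht =>
    hf.1.contDiffAt (mem_interior_iff_mem_nhds.1 (hseg t ht))
  have hg' : ∀ t ∈ Ico (0 : ℝ) 1, HasDerivAt (fun t => f (c t)) (fderiv ℝ f (c t) u) t :=
    fun t ht => ((hf₂ t ht).differentiableAt two_ne_zero).hasFDerivAt.comp_hasDerivAt t (hc t)
  have hg₁' : ∀ t ∈ Ico (0 : ℝ) 1, HasDerivAt (fun t => fderiv ℝ f (c t) u)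
      (iteratedFDeriv ℝ 2 f (c t) ![u, u]) t := by
    intro t ht
    have hD : HasFDerivAt (fderiv ℝ f) (fderiv ℝ (fderiv ℝ f) (c t)) (c t) :=
      (((hf₂ t ht).fderiv_right le_rfl).differentiableAt one_ne_zero).hasFDerivAt
    rw [iteratedFDeriv_two_apply]
    exact (ContinuousLinearMap.apply ℝ ℝ u).hasFDerivAt.comp_hasDerivAt t
      (hD.comp_hasDerivAt t (hc t))
  have hw : w ∈ N := by simpa [c] using interior_subset (hseg 0 (left_mem_Ico.2 one_pos))
  have hg₂ : ∀ t ∈ Ico (0 : ℝ) 1, iteratedFDeriv ℝ 2 f (c t) ![u, u]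
      ≤ iteratedFDeriv ℝ 2 f w ![u, u] + ρ * euclNorm u ^ 3 * t := by
    intro t ht
    have h := hf.2 (c t) (interior_subset (hseg t ht)) w hw u u
    rw [show c t - w = t • u by simp [c], euclNorm_smul, abs_of_nonneg ht.1] at h
    linarith [(abs_le.1 h).2]
  have hg : ContinuousOn (fun t => f (c t)) (Icc 0 1) := by
    refine hf.1.continuousOn.comp (by fun_prop) fun t ht => ?_
    rcases eq_or_lt_of_le ht.2 with rfl | ht1
    · simpa [c] using hu
    · exact interior_subset (hseg t ⟨ht.1, ht1⟩)
  have := le_taylor_two_of_hasDerivAt hg hg' hg₁' hg₂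
  simp only [c, zero_smul, one_smul, add_zero] at this
  linarith

section Neigh

variable {m : ℕ} {γ ε : ℝ} {w u : Fin m → ℝ}

lemma kappa_pos (hγ : 0 ≤ γ) (hε : 0 < ε) (t : ℝ) : 0 < kappa γ ε t := by
  unfold kappa; positivity

lemma add_smul_mem_interior_neigh (hγ : 0 ≤ γ) (hε : 0 < ε)
    (hu : ∀ i, |u i| ≤ kappa γ ε (w i)) {t : ℝ} (ht : |t| < 1) :
    w + t • u ∈ interior (Neigh γ ε w) := by
  have hbox : IsOpen (Set.pi univ fun i => Metric.ball (w i) (kappa γ ε (w i))) :=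
    isOpen_set_pi finite_univ fun _ _ => Metric.isOpen_ball
  refine interior_maximal (fun v hv i => ?_) hbox fun i _ => ?_
  · exact (Real.dist_eq _ _ ▸ Metric.mem_ball.1 (hv i trivial)).le
  · rw [Metric.mem_ball, Real.dist_eq]
    calc |(w + t • u) i - w i| = |t| * |u i| := by simp [abs_mul]
      _ ≤ |t| * kappa γ ε (w i) := by gcongr; exact hu i
      _ < kappa γ ε (w i) := mul_lt_of_lt_one_left (kappa_pos hγ hε _) ht

lemma le_taylor_two_of_isHessianLipschitzOn_neigh {f : (Fin m → ℝ) → ℝ} {ρ : ℝ}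
    (hγ : 0 ≤ γ) (hε : 0 < ε) (hf : IsHessianLipschitzOn f ρ (Neigh γ ε w))
    (hu : ∀ i, |u i| ≤ kappa γ ε (w i)) :
    f (w + u) ≤ f w + fderiv ℝ f w u + (1 / 2) * iteratedFDeriv ℝ 2 f w ![u, u]
      + (ρ / 6) * euclNorm u ^ 3 :=
  le_taylor_two_of_isHessianLipschitzOn hf
    (fun t ht => add_smul_mem_interior_neigh hγ hε hu (abs_lt.2 ⟨by linarith [ht.1], ht.2⟩))
    fun i => by simpa using hu i

lemma integral_comp_add_le_of_isHessianLipschitzOn_neigh {f : (Fin m → ℝ) → ℝ} {ρ : ℝ}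
    (hγ : 0 ≤ γ) (hε : 0 < ε) (hf : IsHessianLipschitzOn f ρ (Neigh γ ε w))
    (hcrit : fderiv ℝ f w = 0) {μ : Measure (Fin m → ℝ)} [IsProbabilityMeasure μ]
    (hbox : ∀ᵐ u ∂μ, ∀ i, |u i| ≤ kappa γ ε (w i))
    (hfμ : Integrable (fun u => f (w + u)) μ) :
    ∫ u, f (w + u) ∂μ ≤ f w + (1 / 2) * hessLambdaMax f w * ∑ i, ∫ u, u i ^ 2 ∂μ
      + (ρ / 6) * ∫ u, euclNorm u ^ 3 ∂μ := by
  have hsq : ∀ i ∈ Finset.univ, Integrable (fun u : Fin m → ℝ => u i ^ 2) μ := fun i _ =>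
    Integrable.of_bound ((continuous_apply i).pow 2).aestronglyMeasurable (kappa γ ε (w i) ^ 2)
      <| hbox.mono fun u hu => by simpa using pow_le_pow_left₀ (abs_nonneg _) (hu i) 2
  have hcube : Integrable (fun u => euclNorm u ^ 3) μ :=
    Integrable.of_bound (continuous_euclNorm.pow 3).aestronglyMeasurable
      (euclNorm (fun i => kappa γ ε (w i)) ^ 3) <| hbox.mono fun u hu => by
        rw [Real.norm_of_nonneg (by positivity [euclNorm_nonneg u])]
        exact pow_le_pow_left₀ (euclNorm_nonneg u) (euclNorm_le_of_abs_le hu) 3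
  have hpt : ∀ᵐ u ∂μ, f (w + u) ≤ f w + (1 / 2) * hessLambdaMax f w * ∑ i, u i ^ 2
      + (ρ / 6) * euclNorm u ^ 3 := hbox.mono fun u hu => by
    have := le_taylor_two_of_isHessianLipschitzOn_neigh hγ hε hf hu
    have := iteratedFDeriv_two_apply_self_le_hessLambdaMax f w u
    rw [hcrit, euclNorm_sq] at *
    simp only [zero_apply, add_zero] at *
    linarith
  have hquad : Integrable (fun u => f w + (1 / 2) * hessLambdaMax f w * ∑ i, u i ^ 2) μ :=
    (integrable_const _).add ((integrable_finsetSum _ hsq).const_mul _)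
  refine (integral_mono_ae hfμ (hquad.fun_add (hcube.const_mul _)) hpt).trans_eq ?_
  rw [integral_add hquad (hcube.const_mul _),
    integral_add (integrable_const _) ((integrable_finsetSum _ hsq).const_mul _),
    integral_const_mul, integral_const_mul, integral_finsetSum _ hsq]
  simp

end Neigh
open Real (exp log)

lemma integral_le_integral_llr_add_log_integral_exp {α : Type*} [MeasurableSpace α]
    {ν π : Measure α} [IsProbabilityMeasure ν] [IsProbabilityMeasure π] {F : α → ℝ}
    (hFν : Integrable F ν) (hFπ : Integrable (fun x => exp (F x)) π) (hac : ν ≪ π)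
    (hint : Integrable (llr ν π) ν) :
    ∫ x, F x ∂ν ≤ ∫ x, llr ν π x ∂ν + log (∫ x, exp (F x) ∂π) := by
  have : IsProbabilityMeasure (π.tilted F) := isProbabilityMeasure_tilted hFπ
  -- Gibbs' inequality for `ν` against the Gibbs measure `π.tilted F`.
  have := InformationTheory.integral_llr_add_sub_measure_univ_nonneg
    (hac.trans (absolutelyContinuous_tilted hFπ)) (integrable_llr_tilted_right hac hFν hint hFπ)
  rw [integral_llr_tilted_right hac hFν hFπ hint] at this
  simp only [probReal_univ] at this
  linarith

lemma integral_le_integral_add_of_integral_exp_le {α : Type*} [MeasurableSpace α]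
    {ν π : Measure α} [IsProbabilityMeasure ν] [IsProbabilityMeasure π] {L L' : α → ℝ}
    {η C δ : ℝ} (hη : 0 < η) (hδ : 0 < δ) (hL : Integrable L ν) (hL' : Integrable L' ν)
    (hexp : Integrable (fun x => exp (η * (L x - L' x))) π)
    (hC : ∫ x, exp (η * (L x - L' x)) ∂π ≤ exp C / δ) (hac : ν ≪ π)
    (hint : Integrable (llr ν π) ν) :
    ∫ x, L x ∂ν ≤ ∫ x, L' x ∂ν + (∫ x, llr ν π x ∂ν + log (1 / δ)) / η + C / η := by
  have hDV := integral_le_integral_llr_add_log_integral_exp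
    (F := fun x => η * (L x - L' x)) ((hL.sub hL').const_mul η) hexp hac hint
  have hlog : log (∫ x, exp (η * (L x - L' x)) ∂π) ≤ C + log (1 / δ) := by
    calc _ ≤ log (exp C / δ) := Real.log_le_log (integral_exp_pos hexp) hC
      _ = C + log (1 / δ) := by
          rw [Real.log_div (Real.exp_ne_zero _) hδ.ne', Real.log_exp, one_div, Real.log_inv]
          ring
  rw [integral_const_mul, integral_sub hL hL'] at hDV
  rw [add_assoc, ← add_div, ← sub_le_iff_le_add', le_div_iff₀ hη]
  linarith

lemma ofReal_one_sub_le_measure_le_div {Ω : Type*} [MeasurableSpace Ω] {P : Measure Ω}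
    [IsProbabilityMeasure P] {X : Ω → ℝ} (hX : 0 ≤ᵐ[P] X) (hXi : Integrable X P) {M δ : ℝ}
    (hM : 0 < M) (hδ : 0 < δ) (hXM : ∫ ω, X ω ∂P ≤ M) :
    ENNReal.ofReal (1 - δ) ≤ P {ω | X ω ≤ M / δ} := by
  have hmarkov := mul_meas_ge_le_integral_of_nonneg hX hXi (M / δ)
  have hbad : P {ω | M / δ ≤ X ω} ≤ ENNReal.ofReal δ := by
    rw [ENNReal.le_ofReal_iff_toReal_le (measure_ne_top _ _) hδ.le, ← measureReal_def]
    have : M / δ * P.real {ω | M / δ ≤ X ω} ≤ M / δ * δ := by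
      rw [div_mul_cancel₀ _ hδ.ne']; linarith
    exact le_of_mul_le_mul_left this (by positivity)
  have hcompl : {ω | X ω ≤ M / δ}ᶜ ⊆ {ω | M / δ ≤ X ω} := fun ω (hω : ¬ X ω ≤ M / δ) =>
    (lt_of_not_ge hω).le
  rw [ENNReal.ofReal_sub _ hδ.le, ENNReal.ofReal_one, tsub_le_iff_right]
  calc (1 : ENNReal) = P univ := measure_univ.symm
    _ ≤ P {ω | X ω ≤ M / δ} + P {ω | X ω ≤ M / δ}ᶜ := measure_univ_le_add_compl _
    _ ≤ P {ω | X ω ≤ M / δ} + ENNReal.ofReal δ := by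
        gcongr; exact (measure_mono hcompl).trans hbad

lemma coe_le_add_klDiv_add_div {α : Type*} [MeasurableSpace α] {ν π : Measure α}
    {x A c d η : ℝ} (hη : 0 < η)
    (h : ν ≪ π → Integrable (llr ν π) ν → x ≤ A + (∫ y, llr ν π y ∂ν + c) / η + d) :
    (x : EReal) ≤ A + (klDiv ν π + c) / η + d := by
  unfold klDiv
  split_ifs with hkl
  · rw [← EReal.coe_add, ← EReal.coe_div, ← EReal.coe_add, ← EReal.coe_add]
    exact EReal.coe_le_coe_iff.2 (h hkl.1 hkl.2)
  · rw [EReal.top_add_coe,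
      EReal.top_div_of_pos_ne_top (by exact_mod_cast hη) (EReal.coe_ne_top η),
      EReal.coe_add_top, EReal.top_add_coe]
    exact le_top

lemma empLoss_mem_Icc {S : Type*} {m n : ℕ} {ℓ : (Fin m → ℝ) → S → ℝ}
    (hℓ01 : ∀ w x, ℓ w x ∈ Icc (0 : ℝ) 1) (s : Fin n → S) (w : Fin m → ℝ) :
    empLoss ℓ s w ∈ Icc (0 : ℝ) 1 :=
  ⟨mul_nonneg (by positivity) (Finset.sum_nonneg fun i _ => (hℓ01 w (s i)).1),
    inv_mul_le_one_of_le₀ ((Finset.sum_le_sum fun i _ => (hℓ01 w (s i)).2).trans_eq (by simp))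
      n.cast_nonneg⟩

section Loss

variable {S : Type*} [MeasurableSpace S] {m n : ℕ} {ℓ : (Fin m → ℝ) → S → ℝ}
  {𝒟 : Measure S}

lemma measurable_empLoss_uncurry (hℓ : Measurable (Function.uncurry ℓ)) :
    Measurable fun p : (Fin n → S) × (Fin m → ℝ) => empLoss ℓ p.1 p.2 :=
  measurable_const.mul <| Finset.measurable_sum _ fun i _ =>
    hℓ.comp (measurable_snd.prodMk ((measurable_pi_apply i).comp measurable_fst))

lemma measurable_empLoss (hℓ : Measurable (Function.uncurry ℓ)) (s : Fin n → S) :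
    Measurable (empLoss ℓ s) :=
  (measurable_empLoss_uncurry hℓ).comp (measurable_const.prodMk measurable_id)

lemma measurable_expLoss [SFinite 𝒟] (hℓ : Measurable (Function.uncurry ℓ)) :
    Measurable (expLoss ℓ 𝒟) :=
  hℓ.stronglyMeasurable.integral_prod_right'.measurable

lemma expLoss_mem_Icc [IsProbabilityMeasure 𝒟] (hℓ : Measurable (Function.uncurry ℓ))
    (hℓ01 : ∀ w x, ℓ w x ∈ Icc (0 : ℝ) 1) (w : Fin m → ℝ) :
    expLoss ℓ 𝒟 w ∈ Icc (0 : ℝ) 1 := by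
  have hmeas : Measurable (ℓ w) := hℓ.comp (measurable_const.prodMk measurable_id)
  have := integral_mono
    (Integrable.of_mem_Icc (μ := 𝒟) 0 1 hmeas.aemeasurable (ae_of_all _ (hℓ01 w)))
    (integrable_const 1) fun x => (hℓ01 w x).2
  exact ⟨integral_nonneg fun x => (hℓ01 w x).1, by simpa [expLoss] using this⟩

lemma integral_exp_mul_expLoss_sub_empLoss_le [IsProbabilityMeasure 𝒟]
    (hℓ : Measurable (Function.uncurry ℓ)) (hℓ01 : ∀ w x, ℓ w x ∈ Icc (0 : ℝ) 1) (hn : n ≠ 0)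
    (η : ℝ) (w : Fin m → ℝ) :
    ∫ s, exp (η * (expLoss ℓ 𝒟 w - empLoss ℓ s w)) ∂(Measure.pi fun _ : Fin n => 𝒟)
      ≤ exp (η ^ 2 / (8 * n)) := by
  -- The integrand factorizes over the samples; Hoeffding's lemma bounds each factor.
  set t := η / n
  set h : S → ℝ := fun x => exp (t * (expLoss ℓ 𝒟 w - ℓ w x))
  have hprod (s : Fin n → S) :
      exp (η * (expLoss ℓ 𝒟 w - empLoss ℓ s w)) = ∏ i, h (s i) := by
    rw [← Real.exp_sum, ← Finset.mul_sum, Finset.sum_sub_distrib]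
    simp only [empLoss, Finset.sum_const, Finset.card_univ, Fintype.card_fin, nsmul_eq_mul, t]
    field_simp
  have hmgf : ∫ x, h x ∂𝒟 ≤ exp (t ^ 2 / 8) := by
    have hmeas : Measurable (ℓ w) := hℓ.comp (measurable_const.prodMk measurable_id)
    have := ((hasSubgaussianMGF_of_mem_Icc hmeas.aemeasurable
      (ae_of_all 𝒟 (hℓ01 w))).neg).mgf_le t
    convert this using 2
    · simp [mgf, h, expLoss]
    · norm_num; ring
  calc _ = (∫ x, h x ∂𝒟) ^ n := by
        simp_rw [hprod]; simpa using integral_fintype_prod_eq_pow (ι := Fin n) h (μ := 𝒟)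
    _ ≤ exp (t ^ 2 / 8) ^ n :=
        pow_le_pow_left₀ (integral_nonneg fun _ => (Real.exp_pos _).le) hmgf n
    _ = exp (η ^ 2 / (8 * n)) := by rw [← Real.exp_nat_mul]; congr 1; simp only [t]; field_simp

lemma exp_mul_expLoss_sub_empLoss_le [IsProbabilityMeasure 𝒟]
    (hℓ : Measurable (Function.uncurry ℓ)) (hℓ01 : ∀ w x, ℓ w x ∈ Icc (0 : ℝ) 1) (η : ℝ)
    (s : Fin n → S) (w : Fin m → ℝ) :
    exp (η * (expLoss ℓ 𝒟 w - empLoss ℓ s w)) ≤ exp |η| := by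
  have hL := expLoss_mem_Icc hℓ hℓ01 (𝒟 := 𝒟) w
  have hL' := empLoss_mem_Icc hℓ01 s w
  have hgap : |expLoss ℓ 𝒟 w - empLoss ℓ s w| ≤ 1 :=
    abs_sub_le_iff.2 ⟨by linarith [hL.2, hL'.1], by linarith [hL.1, hL'.2]⟩
  refine Real.exp_le_exp.2 ((le_abs_self _).trans ?_)
  rw [abs_mul]
  exact mul_le_of_le_one_right (abs_nonneg η) hgap

lemma integrable_exp_mul_expLoss_sub_empLoss [IsProbabilityMeasure 𝒟]
    (hℓ : Measurable (Function.uncurry ℓ)) (hℓ01 : ∀ w x, ℓ w x ∈ Icc (0 : ℝ) 1) (η : ℝ)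
    {β : Type*} [MeasurableSpace β] {μ : Measure β} [IsFiniteMeasure μ] {s : β → Fin n → S}
    {w : β → Fin m → ℝ} (hs : Measurable s) (hw : Measurable w) :
    Integrable (fun b => exp (η * (expLoss ℓ 𝒟 (w b) - empLoss ℓ (s b) (w b)))) μ :=
  Integrable.of_bound ((measurable_const.mul (((measurable_expLoss hℓ).comp hw).sub
      ((measurable_empLoss_uncurry hℓ).comp (hs.prodMk hw)))).exp.aestronglyMeasurable)
    (exp |η|) (ae_of_all _ fun b => by
      rw [Real.norm_of_nonneg (Real.exp_pos _).le]
      exact exp_mul_expLoss_sub_empLoss_le hℓ hℓ01 η (s b) (w b))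

lemma ofReal_one_sub_le_measure_integral_exp_le [IsProbabilityMeasure 𝒟]
    (hℓ : Measurable (Function.uncurry ℓ)) (hℓ01 : ∀ w x, ℓ w x ∈ Icc (0 : ℝ) 1)
    (π : Measure (Fin m → ℝ)) [IsProbabilityMeasure π] (hn : n ≠ 0) {δ : ℝ} (hδ : 0 < δ)
    (η : ℝ) :
    ENNReal.ofReal (1 - δ) ≤ (Measure.pi fun _ : Fin n => 𝒟)
      {s | ∫ w, exp (η * (expLoss ℓ 𝒟 w - empLoss ℓ s w)) ∂π ≤ exp (η ^ 2 / (8 * n)) / δ} := by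
  set P := Measure.pi fun _ : Fin n => 𝒟
  have hF : Integrable (Function.uncurry fun s w => exp (η * (expLoss ℓ 𝒟 w - empLoss ℓ s w)))
      (P.prod π) :=
    integrable_exp_mul_expLoss_sub_empLoss hℓ hℓ01 η measurable_fst measurable_snd
  refine ofReal_one_sub_le_measure_le_div
    (ae_of_all _ fun s => integral_nonneg fun w => (Real.exp_pos _).le) hF.integral_prod_left
    (Real.exp_pos _) hδ ?_
  rw [integral_integral_swap hF]
  calc _ ≤ ∫ _, exp (η ^ 2 / (8 * n)) ∂π := integral_mono hF.integral_prod_right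
        (integrable_const _) fun w => integral_exp_mul_expLoss_sub_empLoss_le hℓ hℓ01 hn η w
    _ = exp (η ^ 2 / (8 * n)) := by simp

end Loss

theorem lemma4_pacBayes_lambdaMax_general
    (m n : ℕ) (hn : 0 < n)
    {S : Type*} [MeasurableSpace S] (𝒟 : Measure S) [IsProbabilityMeasure 𝒟]
    (ℓ : (Fin m → ℝ) → S → ℝ)
    (hℓmeas : Measurable (Function.uncurry ℓ))
    (hℓ01 : ∀ w x, ℓ w x ∈ Set.Icc (0 : ℝ) 1)
    (π : Measure (Fin m → ℝ)) [IsProbabilityMeasure π]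
    (δ η γ ε ρ : ℝ) (hδ : 0 < δ) (hη : 0 < η) (hγ : 0 < γ) (hε : 0 < ε) :
    ENNReal.ofReal (1 - δ) ≤
      (Measure.pi fun _ : Fin n => 𝒟) {s : Fin n → S |
        ∀ w : Fin m → ℝ,
          fderiv ℝ (empLoss ℓ s) w = 0 →
          IsHessianLipschitzOn (empLoss ℓ s) ρ (Neigh γ ε w) →
          ∀ μ : Measure (Fin m → ℝ), IsProbabilityMeasure μ →
            (∀ᵐ u ∂μ, ∀ i, |u i| ≤ kappa γ ε (w i)) →
            ((∫ u, expLoss ℓ 𝒟 (w + u) ∂μ : ℝ) : EReal) ≤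
              ((empLoss ℓ s w
                  + (1 / 2) * hessLambdaMax (empLoss ℓ s) w * ∑ i, ∫ u, (u i) ^ 2 ∂μ
                  + (ρ / 6) * ∫ u, (euclNorm u) ^ 3 ∂μ : ℝ) : EReal)
                + (klDiv (μ.map (fun u => w + u)) π
                    + ((Real.log (1 / δ) : ℝ) : EReal)) / (η : EReal)
                + ((η / (2 * n) : ℝ) : EReal)} := by
  refine (ofReal_one_sub_le_measure_integral_exp_le hℓmeas hℓ01 π hn.ne' hδ η).trans
    (measure_mono fun s hs w hcrit hhess μ hμ hbox => ?_)
  have hw : Measurable (w + · : (Fin m → ℝ) → Fin m → ℝ) := measurable_const_add w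
  have : IsProbabilityMeasure (μ.map (w + ·)) := Measure.isProbabilityMeasure_map hw.aemeasurable
  have hL := measurable_expLoss (𝒟 := 𝒟) hℓmeas
  have hL' := measurable_empLoss hℓmeas s
  refine coe_le_add_klDiv_add_div hη fun hac hint => ?_
  have hPB := integral_le_integral_add_of_integral_exp_le hη hδ
    (Integrable.of_mem_Icc 0 1 hL.aemeasurable (ae_of_all _ (expLoss_mem_Icc hℓmeas hℓ01)))
    (Integrable.of_mem_Icc 0 1 hL'.aemeasurable (ae_of_all _ (empLoss_mem_Icc hℓ01 s)))
    (integrable_exp_mul_expLoss_sub_empLoss hℓmeas hℓ01 η measurable_const measurable_id)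
    hs hac hint
  rw [integral_map hw.aemeasurable hL.aestronglyMeasurable,
    integral_map hw.aemeasurable hL'.aestronglyMeasurable] at hPB
  have hT := integral_comp_add_le_of_isHessianLipschitzOn_neigh hγ.le hε hhess hcrit hbox
    (Integrable.of_mem_Icc 0 1 (hL'.comp hw).aemeasurable
      (ae_of_all _ fun u => empLoss_mem_Icc hℓ01 s (w + u)))
  have hη8 : η ^ 2 / (8 * n) / η ≤ η / (2 * n) := by
    rw [sq, mul_div_assoc, mul_div_cancel_left₀ _ hη.ne']
    gcongr; norm_num
  linarith

/-- **Lemma 4**: with probability at least `1 − δ` over the draw of `n` i.i.d. samples,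
simultaneously for every local optimum `w*` (`∇L̂(w*) = 0`) at which `L̂` is `ρ`-Hessian
Lipschitz on `Neigh_{γ,ε}(w*)`, and every random perturbation `u` (law `μ`, no
independence or zero-mean assumption) with `|uᵢ| ≤ κ_{γ,ε}(wᵢ*)` a.s.:
`E_u[L(w*+u)] ≤ L̂(w*) + (1/2)λ_max(∇²L̂(w*))∑ᵢE[uᵢ²] + (ρ/6)E[‖u‖³]
  + (KL(law(w*+u)‖π) + log(1/δ))/η + η/(2n)`. -/
theorem lemma4_pacBayes_lambdaMax
    (m n : ℕ) (hn : 0 < n)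
    {S : Type*} [MeasurableSpace S] (𝒟 : Measure S) [IsProbabilityMeasure 𝒟]
    (ℓ : (Fin m → ℝ) → S → ℝ)
    (hℓmeas : Measurable (Function.uncurry ℓ))
    (hℓ01 : ∀ w x, ℓ w x ∈ Set.Icc (0 : ℝ) 1)
    (π : Measure (Fin m → ℝ)) [IsProbabilityMeasure π]
    (δ η γ ε ρ : ℝ) (hδ : 0 < δ) (hη : 0 < η) (hγ : 0 < γ) (hε : 0 < ε) (hρ : 0 ≤ ρ) :
    ENNReal.ofReal (1 - δ) ≤
      (Measure.pi fun _ : Fin n => 𝒟) {s : Fin n → S |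
        ∀ w : Fin m → ℝ,
          fderiv ℝ (empLoss ℓ s) w = 0 →
          IsHessianLipschitzOn (empLoss ℓ s) ρ (Neigh γ ε w) →
          ∀ μ : Measure (Fin m → ℝ), IsProbabilityMeasure μ →
            (∀ᵐ u ∂μ, ∀ i, |u i| ≤ kappa γ ε (w i)) →
            ((∫ u, expLoss ℓ 𝒟 (w + u) ∂μ : ℝ) : EReal) ≤
              ((empLoss ℓ s w
                  + (1 / 2) * hessLambdaMax (empLoss ℓ s) w * ∑ i, ∫ u, (u i) ^ 2 ∂μ
                  + (ρ / 6) * ∫ u, (euclNorm u) ^ 3 ∂μ : ℝ) : EReal)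
                + (klDiv (μ.map (fun u => w + u)) π
                    + ((Real.log (1 / δ) : ℝ) : EReal)) / (η : EReal)
                + ((η / (2 * n) : ℝ) : EReal)} :=
  lemma4_pacBayes_lambdaMax_general m n hn 𝒟 ℓ hℓmeas hℓ01 π δ η γ ε ρ hδ hη hγ hε
end
end

section
/- (KL divergence after truncation). Let μ = ⊗_{i=1}^m N(w_i, σ_i²) be a product Gaussian on ℝ^m, let E = {v ∈ ℝ^m : |v_i − w_i| < κ_i for all i} be a box around w with Z = μ(E) ≥ 1/2, and let μ_E = μ(·|E) be the truncated (conditioned) measure. Then for any Gaussian prior π = N(0, τ·I_m), KL(μ_E‖π) ≤ 2·(KL(μ‖π) + 1). -/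
/-!
Conditioning multiplies the density by `μ(s)⁻¹` on `s`, so
`KL(μ[|s] ‖ ν) = μ(s)⁻¹ ∫_s log (dμ/dν) dμ - log μ(s)`. Since `x log x ≥ x - 1`, the part of
`∫ log (dμ/dν) dμ` lying on `sᶜ` is at least `μ(sᶜ) - ν(sᶜ) ≥ -μ(s)`, and `-log μ(s) ≤ μ(s)⁻¹ - 1`;
together `KL(μ[|s] ‖ ν) ≤ μ(s)⁻¹ (KL(μ ‖ ν) + 1)`, which is at most `2 (KL(μ ‖ ν) + 1)` when
`μ(s) ≥ 1/2` (Gibbs' inequality gives `KL(μ ‖ ν) ≥ 0`).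
-/

open MeasureTheory ProbabilityTheory

noncomputable section

open scoped Classical

open Real Set

section LogLikelihoodRatio

variable {α : Type*} [MeasurableSpace α] {μ ν : Measure α} {s : Set α}

lemma llr_restrict_ae_eq [SigmaFinite μ] [SigmaFinite ν] (hμν : μ ≪ ν) (hs : MeasurableSet s) :
    llr (μ.restrict s) ν =ᵐ[μ.restrict s] llr μ ν := by
  have hac : μ.restrict s ≪ ν := Measure.absolutelyContinuous_restrict.trans hμν
  filter_upwards [hac.ae_le (Measure.rnDeriv_restrict μ ν hs), ae_restrict_mem hs] with x hx hxs
  simp only [llr_def, hx, indicator_of_mem hxs]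

lemma llr_cond_ae_eq [IsFiniteMeasure μ] [SigmaFinite ν] (hμν : μ ≪ ν) (hs : MeasurableSet s)
    (hμs : μ s ≠ 0) :
    llr μ[|s] ν =ᵐ[μ[|s]] fun x ↦ llr μ ν x - log (μ.real s) := by
  have hac : μ.restrict s ≪ ν := Measure.absolutelyContinuous_restrict.trans hμν
  have h_smul := llr_smul_left hac (μ s)⁻¹ (by simp [measure_ne_top]) (by simpa using hμs)
  filter_upwards [Measure.ae_smul_measure h_smul _,
    Measure.ae_smul_measure (llr_restrict_ae_eq hμν hs) _] with x hx hx'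
  rw [ProbabilityTheory.cond, hx, hx', ENNReal.toReal_inv, log_inv, measureReal_def, sub_eq_add_neg]

lemma integrable_llr_cond [IsFiniteMeasure μ] [SigmaFinite ν] (hμν : μ ≪ ν)
    (h_int : Integrable (llr μ ν) μ) (hs : MeasurableSet s) (hμs : μ s ≠ 0) :
    Integrable (llr μ[|s] ν) μ[|s] :=
  have := cond_isProbabilityMeasure (μ := μ) hμs
  (integrable_congr (llr_cond_ae_eq hμν hs hμs)).2 <|
    (h_int.restrict.smul_measure (ENNReal.inv_ne_top.2 hμs)).sub (integrable_const (μ := μ[|s]) _)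

lemma integral_llr_cond [IsFiniteMeasure μ] [SigmaFinite ν] (hμν : μ ≪ ν)
    (h_int : Integrable (llr μ ν) μ) (hs : MeasurableSet s) (hμs : μ s ≠ 0) :
    ∫ x, llr μ[|s] ν x ∂μ[|s] = (μ.real s)⁻¹ * ∫ x in s, llr μ ν x ∂μ - log (μ.real s) := by
  have := cond_isProbabilityMeasure (μ := μ) hμs
  have h_int_s : Integrable (llr μ ν) μ[|s] :=
    h_int.restrict.smul_measure (ENNReal.inv_ne_top.2 hμs)
  rw [integral_congr_ae (llr_cond_ae_eq hμν hs hμs), integral_sub h_int_s (integrable_const _),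
    integral_const, probReal_univ, one_smul, ProbabilityTheory.cond, integral_smul_measure,
    ENNReal.toReal_inv, measureReal_def, smul_eq_mul]

lemma measureReal_sub_le_setIntegral_llr [IsFiniteMeasure μ] [IsFiniteMeasure ν] (hμν : μ ≪ ν)
    (h_int : Integrable (llr μ ν) μ) (hs : MeasurableSet s) :
    μ.real s - ν.real s ≤ ∫ x in s, llr μ ν x ∂μ := by
  have h_dens : Integrable (fun x ↦ (μ.rnDeriv ν x).toReal) ν := Measure.integrable_toReal_rnDeriv
  calc μ.real s - ν.real s = ∫ x in s, ((μ.rnDeriv ν x).toReal - 1) ∂ν := by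
        rw [integral_sub h_dens.integrableOn (integrable_const _),
          Measure.setIntegral_toReal_rnDeriv hμν, setIntegral_const, smul_eq_mul, mul_one]
    _ ≤ ∫ x in s, (μ.rnDeriv ν x).toReal • llr μ ν x ∂ν :=
        setIntegral_mono (h_dens.integrableOn.sub (integrable_const _))
          ((integrable_rnDeriv_smul_iff hμν).2 h_int).integrableOn
          fun x ↦ self_sub_one_le_mul_log ENNReal.toReal_nonneg
    _ = ∫ x in s, llr μ ν x ∂μ := setIntegral_rnDeriv_smul hμν hs

lemma integral_llr_cond_le [IsProbabilityMeasure μ] [IsProbabilityMeasure ν] (hμν : μ ≪ ν)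
    (h_int : Integrable (llr μ ν) μ) (hs : MeasurableSet s) (hμs : μ s ≠ 0) :
    ∫ x, llr μ[|s] ν x ∂μ[|s] ≤ (μ.real s)⁻¹ * (∫ x, llr μ ν x ∂μ + 1) := by
  set Z := μ.real s
  have hZ : 0 < Z := ENNReal.toReal_pos hμs (measure_ne_top μ s)
  have h_compl : -Z ≤ ∫ x in sᶜ, llr μ ν x ∂μ := by
    have := measureReal_sub_le_setIntegral_llr hμν h_int hs.compl
    rw [probReal_compl_eq_one_sub hs] at this
    linarith [measureReal_le_one (μ := ν) (s := sᶜ)]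
  have h_split := integral_add_compl hs h_int
  rw [integral_llr_cond hμν h_int hs hμs]
  calc Z⁻¹ * ∫ x in s, llr μ ν x ∂μ - log Z
      ≤ Z⁻¹ * (∫ x, llr μ ν x ∂μ + Z) - (1 - Z⁻¹) := by
        gcongr
        · linarith
        · exact one_sub_inv_le_log_of_pos hZ
    _ = Z⁻¹ * (∫ x, llr μ ν x ∂μ + 1) := by field_simp; ring

lemma klDiv_cond_le [IsProbabilityMeasure μ] [IsProbabilityMeasure ν] (hs : MeasurableSet s)
    (hμs : 1 / 2 ≤ μ s) :
    klDiv μ[|s] ν ≤ 2 * (klDiv μ ν + 1) := by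
  by_cases h : μ ≪ ν ∧ Integrable (llr μ ν) μ
  swap
  · rw [show klDiv μ ν = ⊤ from if_neg h, EReal.top_add_of_ne_bot (by decide),
      EReal.mul_top_of_pos (by norm_num)]
    exact le_top
  obtain ⟨hμν, h_int⟩ := h
  have hμs₀ : μ s ≠ 0 := (lt_of_lt_of_le (by norm_num) hμs).ne'
  have hZ : 1 / 2 ≤ μ.real s := by
    simpa [measureReal_def] using ENNReal.toReal_mono (measure_ne_top μ s) hμs
  have h_gibbs : 0 ≤ ∫ x, llr μ ν x ∂μ := by
    simpa using InformationTheory.integral_llr_add_sub_measure_univ_nonneg hμν h_int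
  rw [klDiv, if_pos ⟨cond_absolutelyContinuous.trans hμν, integrable_llr_cond hμν h_int hs hμs₀⟩,
    klDiv, if_pos ⟨hμν, h_int⟩]
  calc ((∫ x, llr μ[|s] ν x ∂μ[|s] : ℝ) : EReal)
      ≤ (((μ.real s)⁻¹ * (∫ x, llr μ ν x ∂μ + 1) : ℝ) : EReal) :=
        EReal.coe_le_coe_iff.2 (integral_llr_cond_le hμν h_int hs hμs₀)
    _ ≤ ((2 * (∫ x, llr μ ν x ∂μ + 1) : ℝ) : EReal) := by
        gcongr
        rw [inv_le_comm₀ (by linarith) two_pos]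
        linarith
    _ = 2 * ((∫ x, llr μ ν x ∂μ : ℝ) + 1) := by norm_cast

end LogLikelihoodRatio

theorem klDiv_truncation_general
    (m : ℕ) (w σ : Fin m → ℝ) (κ : Fin m → ℝ) (τ : ℝ)
    (μ : Measure (Fin m → ℝ))
    (hμ : μ = Measure.pi fun i => gaussianReal (w i) (Real.toNNReal ((σ i) ^ 2)))
    (E : Set (Fin m → ℝ)) (hE : E = {v | ∀ i, |v i - w i| < κ i})
    (hZ : (1 : ENNReal) / 2 ≤ μ E) :
    klDiv (ProbabilityTheory.cond μ E) (Measure.pi fun _ => gaussianReal 0 (Real.toNNReal τ))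
      ≤ 2 * (klDiv μ (Measure.pi fun _ => gaussianReal 0 (Real.toNNReal τ)) + 1) := by
  subst hμ hE
  refine klDiv_cond_le ?_ hZ
  simp only [ofPred_forall]
  exact .iInter fun i ↦ measurableSet_lt (by fun_prop) measurable_const

/-- **KL divergence after truncation**: let `μ = ⊗ᵢ N(wᵢ, σᵢ²)`, let
`E = {v : |vᵢ − wᵢ| < κᵢ ∀ i}` be a box with `Z = μ(E) ≥ 1/2`, and let `μ_E = μ(·|E)`
be the truncated measure. Then for the Gaussian prior `π = N(0, τ·I_m)`,
`KL(μ_E‖π) ≤ 2(KL(μ‖π) + 1)`. -/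
theorem klDiv_truncation
    (m : ℕ) (w σ : Fin m → ℝ) (hσ : ∀ i, 0 < σ i) (κ : Fin m → ℝ) (τ : ℝ) (hτ : 0 < τ)
    (μ : Measure (Fin m → ℝ))
    (hμ : μ = Measure.pi fun i => gaussianReal (w i) (Real.toNNReal ((σ i) ^ 2)))
    (E : Set (Fin m → ℝ)) (hE : E = {v | ∀ i, |v i - w i| < κ i})
    (hZ : (1 : ENNReal) / 2 ≤ μ E) :
    klDiv (ProbabilityTheory.cond μ E) (Measure.pi fun _ => gaussianReal 0 (Real.toNNReal τ))
      ≤ 2 * (klDiv μ (Measure.pi fun _ => gaussianReal 0 (Real.toNNReal τ)) + 1) :=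
  klDiv_truncation_general m w σ κ τ μ hμ E hE hZ
end
end
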